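/- Let G be a finite simple graph with at least one edge. Then max{ j − i : there is a self disjoint set in G consisting of i edges whose union has j vertices } = max{ j − i : there is a self semi-disjoint set in G consisting of i edges whose union has j vertices } = max{ j : there is a strongly disjoint set of bouquets of G consisting of j bouquets } (that is, d'_{1,G} = d'_{2,G} = d'_G). -/

import Mathlib

variable {V : Type*} [DecidableEq V] [Fintype V]

/-- The union of a family of edges. -/
def unionEdges (M : Finset (Finset V)) : Finset V := M.biUnion id

/-- `E` is the edge set of a simple hypergraph: every edge has at least two
vertices and no edge is contained in another distinct edge. -/
def IsSimpleHypergraph (E : Finset (Finset V)) : Prop :=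
  (∀ S ∈ E, 2 ≤ S.card) ∧ ∀ S ∈ E, ∀ T ∈ E, S ⊆ T → S = T

/-- A family `M` of edges of `E` is a semi-induced matching if no edge of `E`
outside `M` is contained in the union of the members of `M`. -/
def IsSemiInducedMatching (E M : Finset (Finset V)) : Prop :=
  M ⊆ E ∧ ∀ S ∈ E, S ∉ M → ¬ S ⊆ unionEdges M

/-- An induced matching is a semi-induced matching whose edges are pairwise disjoint. -/
def IsInducedMatching (E M : Finset (Finset V)) : Prop :=
  IsSemiInducedMatching E M ∧ ∀ S ∈ M, ∀ T ∈ M, S ≠ T → Disjoint S T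

/-- A self semi-induced matching is a semi-induced matching in which no member
is contained in the union of the other members. -/
def IsSelfSemiInducedMatching (E M : Finset (Finset V)) : Prop :=
  IsSemiInducedMatching E M ∧ ∀ S ∈ M, ¬ S ⊆ unionEdges (M.erase S)

/-- A self-contained semi-induced matching. -/
def IsSelfContainedSemiInducedMatching (E M : Finset (Finset V)) : Prop :=
  M ⊆ E ∧
  (∀ S ∈ E, S ∉ M → ¬ S ⊆ unionEdges M ∨ ∃ T ∈ M, T ⊆ S ∪ unionEdges (M.erase T)) ∧
  ∀ S ∈ M, ¬ S ⊆ unionEdges (M.erase S)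

/-- A self disjoint set of edges. -/
def IsSelfDisjointSet (E M : Finset (Finset V)) : Prop :=
  M ⊆ E ∧ (∀ S ∈ M, ¬ S ⊆ unionEdges (M.erase S)) ∧
  ∃ M₀ ⊆ M, IsInducedMatching E M₀ ∧
    ∀ S ∈ M, S ∉ M₀ → ∃ T ∈ M₀, (S \ T).card = 1

/-- A self semi-disjoint set of edges. -/
def IsSelfSemiDisjointSet (E M : Finset (Finset V)) : Prop :=
  M ⊆ E ∧ (∀ S ∈ M, ¬ S ⊆ unionEdges (M.erase S)) ∧
  ∃ M₀ ⊆ M, IsSemiInducedMatching E M₀ ∧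
    ∀ S ∈ M, S ∉ M₀ → ∃ T ∈ M₀, (S \ T).card = 1

/-- A bouquet of the (2-uniform) graph with edge set `E`, given by its root `b.1`
and its nonempty set of flowers `b.2`; its stems must be edges of `E`. -/
def IsBouquet (E : Finset (Finset V)) (b : V × Finset V) : Prop :=
  b.2.Nonempty ∧ b.1 ∉ b.2 ∧ ∀ y ∈ b.2, ({b.1, y} : Finset V) ∈ E

/-- The vertex set of a bouquet. -/
def bouquetVerts (b : V × Finset V) : Finset V := insert b.1 b.2

/-- The set of stems of a bouquet. -/
def stems (b : V × Finset V) : Finset (Finset V) :=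
  b.2.image fun y => ({b.1, y} : Finset V)

/-- A strongly disjoint set of bouquets: the vertex sets of the bouquets are
pairwise disjoint and one can choose one stem from each bouquet such that the
chosen stems form an induced matching. -/
def IsStronglyDisjointBouquets (E : Finset (Finset V)) (B : Finset (V × Finset V)) : Prop :=
  (∀ b ∈ B, IsBouquet E b) ∧
  (∀ b ∈ B, ∀ b' ∈ B, b ≠ b' → Disjoint (bouquetVerts b) (bouquetVerts b')) ∧
  ∃ f : V × Finset V → V, (∀ b ∈ B, f b ∈ b.2) ∧
    IsInducedMatching E (B.image fun b => ({b.1, f b} : Finset V))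

/-!
A family `B` of vertex-disjoint bouquets has one vertex more than stems per bouquet, so the set
of all its stems has `j - i = #B`; if `B` is strongly disjoint, this set is self disjoint, with
the chosen stems as the induced matching. Conversely, in a self semi-disjoint set `M` every edge
has a private vertex, its flower, and another endpoint, its root. Edges with distinct roots are
disjoint, so grouping the edges by root gives vertex-disjoint bouquets whose stems are exactly
`M`. Every root carries an edge of the semi-induced matching `M₀`, and one such edge per root
gives an induced matching. Hence the three sets of values coincide, not only their suprema.
-/

section

variable {V : Type*} [DecidableEq V]

lemma mem_unionEdges {M : Finset (Finset V)} {v : V} :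
    v ∈ unionEdges M ↔ ∃ S ∈ M, v ∈ S := by
  simp [unionEdges]

lemma unionEdges_mono {M N : Finset (Finset V)} (h : M ⊆ N) :
    unionEdges M ⊆ unionEdges N :=
  Finset.biUnion_subset_biUnion_of_subset_left _ h

lemma unionEdges_biUnion {ι : Type*} (s : Finset ι) (t : ι → Finset (Finset V)) :
    unionEdges (s.biUnion t) = s.biUnion fun i => unionEdges (t i) :=
  Finset.biUnion_biUnion _ _ _

lemma IsSemiInducedMatching.of_subset {E M N : Finset (Finset V)}
    (hM : IsSemiInducedMatching E M) (hNM : N ⊆ M)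
    (hN : ∀ S ∈ M, S ∉ N → ¬ S ⊆ unionEdges N) : IsSemiInducedMatching E N :=
  ⟨hNM.trans hM.1, fun S hS hSN hSU =>
    if hSM : S ∈ M then hN S hSM hSN hSU
    else hM.2 S hS hSM (hSU.trans (unionEdges_mono hNM))⟩

lemma IsSelfDisjointSet.isSelfSemiDisjointSet {E M : Finset (Finset V)}
    (hM : IsSelfDisjointSet E M) : IsSelfSemiDisjointSet E M :=
  let ⟨hME, hself, M₀, hM₀M, hM₀, hatt⟩ := hM
  ⟨hME, hself, M₀, hM₀M, hM₀.1, hatt⟩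

lemma mem_stems {b : V × Finset V} {S : Finset V} :
    S ∈ stems b ↔ ∃ y ∈ b.2, {b.1, y} = S :=
  Finset.mem_image

lemma subset_bouquetVerts_of_mem_stems {b : V × Finset V} {S : Finset V}
    (hS : S ∈ stems b) : S ⊆ bouquetVerts b := by
  obtain ⟨y, hy, rfl⟩ := mem_stems.1 hS
  exact Finset.insert_subset_insert _ (Finset.singleton_subset_iff.2 hy)

lemma unionEdges_stems {b : V × Finset V} (hb : b.2.Nonempty) :
    unionEdges (stems b) = bouquetVerts b := by
  refine (Finset.biUnion_subset.2 fun S hS => subset_bouquetVerts_of_mem_stems hS).antisymm ?_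
  obtain ⟨y₀, hy₀⟩ := hb
  intro v hv
  rcases Finset.mem_insert.1 hv with rfl | hv
  · exact mem_unionEdges.2 ⟨_, mem_stems.2 ⟨y₀, hy₀, rfl⟩, Finset.mem_insert_self _ _⟩
  · exact mem_unionEdges.2 ⟨_, mem_stems.2 ⟨v, hv, rfl⟩, by simp⟩

lemma card_stems {b : V × Finset V} (hb : b.1 ∉ b.2) : (stems b).card = b.2.card := by
  refine Finset.card_image_of_injOn fun y hy z hz hyz => ?_
  have : y ∈ ({b.1, z} : Finset V) := hyz ▸ by simp
  rcases Finset.mem_insert.1 this with rfl | h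
  · exact absurd hy hb
  · exact Finset.mem_singleton.1 h

lemma IsBouquet.stems_subset {E : Finset (Finset V)} {b : V × Finset V} (hb : IsBouquet E b) :
    stems b ⊆ E :=
  Finset.image_subset_iff.2 hb.2.2

lemma card_unionEdges_biUnion_stems {B : Finset (V × Finset V)}
    (hB : ∀ b ∈ B, b.2.Nonempty ∧ b.1 ∉ b.2)
    (hdisj : (B : Set (V × Finset V)).PairwiseDisjoint bouquetVerts) :
    (unionEdges (B.biUnion stems)).card = (B.biUnion stems).card + B.card := by
  have hstems : (B : Set (V × Finset V)).PairwiseDisjoint stems := by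
    intro b hb b' hb' hne
    refine Finset.disjoint_left.2 fun S hS hS' => ?_
    obtain ⟨y, -, rfl⟩ := mem_stems.1 hS
    have hroot : b.1 ∈ ({b.1, y} : Finset V) := Finset.mem_insert_self _ _
    exact Finset.disjoint_left.1 (hdisj hb hb' hne) (subset_bouquetVerts_of_mem_stems hS hroot)
      (subset_bouquetVerts_of_mem_stems hS' hroot)
  have hverts : unionEdges (B.biUnion stems) = B.biUnion bouquetVerts := by
    rw [unionEdges_biUnion]
    exact Finset.biUnion_congr rfl fun b hb => unionEdges_stems (hB b hb).1
  rw [hverts, Finset.card_biUnion hdisj, Finset.card_biUnion hstems, Finset.card_eq_sum_ones B,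
    ← Finset.sum_add_distrib]
  refine Finset.sum_congr rfl fun b hb => ?_
  rw [bouquetVerts, Finset.card_insert_of_notMem (hB b hb).2, card_stems (hB b hb).2]

namespace IsStronglyDisjointBouquets

variable {E : Finset (Finset V)} {B : Finset (V × Finset V)}

lemma pairwiseDisjoint (hB : IsStronglyDisjointBouquets E B) :
    (B : Set (V × Finset V)).PairwiseDisjoint bouquetVerts :=
  fun b hb b' hb' hne => hB.2.1 b hb b' hb' hne

lemma card_unionEdges_sub_card (hB : IsStronglyDisjointBouquets E B) :
    (unionEdges (B.biUnion stems)).card - (B.biUnion stems).card = B.card := by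
  rw [card_unionEdges_biUnion_stems (fun b hb => ⟨(hB.1 b hb).1, (hB.1 b hb).2.1⟩)
    hB.pairwiseDisjoint, Nat.add_sub_cancel_left]

lemma eq_of_flower_mem (hB : IsStronglyDisjointBouquets E B)
    {b : V × Finset V} (hb : b ∈ B) {y : V} (hy : y ∈ b.2) {S : Finset V}
    (hS : S ∈ B.biUnion stems) (hyS : y ∈ S) : S = {b.1, y} := by
  obtain ⟨b', hb', hSb'⟩ := Finset.mem_biUnion.1 hS
  obtain rfl : b' = b := by
    by_contra hne
    exact Finset.disjoint_left.1 (hB.pairwiseDisjoint hb' hb hne)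
      (subset_bouquetVerts_of_mem_stems hSb' hyS) (Finset.mem_insert_of_mem hy)
  obtain ⟨z, -, rfl⟩ := mem_stems.1 hSb'
  rcases Finset.mem_insert.1 hyS with rfl | hyz
  · exact absurd hy (hB.1 _ hb).2.1
  · rw [Finset.mem_singleton.1 hyz]

lemma isSelfDisjointSet (hB : IsStronglyDisjointBouquets E B) :
    IsSelfDisjointSet E (B.biUnion stems) := by
  obtain ⟨f, hf, hmatch⟩ := hB.2.2
  refine ⟨Finset.biUnion_subset.2 fun b hb => (hB.1 b hb).stems_subset, ?_, _, ?_, hmatch, ?_⟩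
  · intro S hS hsub
    obtain ⟨b, hb, hSb⟩ := Finset.mem_biUnion.1 hS
    obtain ⟨y, hy, rfl⟩ := mem_stems.1 hSb
    obtain ⟨T, hT, hyT⟩ :=
      mem_unionEdges.1 (hsub (Finset.mem_insert_of_mem (Finset.mem_singleton_self y)))
    exact (Finset.mem_erase.1 hT).1 (hB.eq_of_flower_mem hb hy (Finset.mem_erase.1 hT).2 hyT)
  · refine Finset.image_subset_iff.2 fun b hb => Finset.mem_biUnion.2 ⟨b, hb, ?_⟩
    exact mem_stems.2 ⟨f b, hf b hb, rfl⟩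
  · intro S hS hSM₀
    obtain ⟨b, hb, hSb⟩ := Finset.mem_biUnion.1 hS
    obtain ⟨y, hy, rfl⟩ := mem_stems.1 hSb
    have hy₁ : y ≠ b.1 := fun h => (hB.1 b hb).2.1 (h ▸ hy)
    have hyf : y ≠ f b := fun h => hSM₀ (Finset.mem_image.2 ⟨b, hb, by rw [h]⟩)
    refine ⟨{b.1, f b}, Finset.mem_image_of_mem _ hb, ?_⟩
    rw [show ({b.1, y} : Finset V) \ {b.1, f b} = {y} by ext; grind]
    exact Finset.card_singleton y

end IsStronglyDisjointBouquets

structure IsRootedFamily (M : Finset (Finset V)) (root flower : Finset V → V) : Prop where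
  eq_pair : ∀ S ∈ M, S = {root S, flower S}
  root_ne_flower : ∀ S ∈ M, root S ≠ flower S
  eq_of_flower_mem : ∀ S ∈ M, ∀ T ∈ M, flower S ∈ T → T = S

lemma exists_isRootedFamily [Nonempty V] {M : Finset (Finset V)} (hcard : ∀ S ∈ M, S.card = 2)
    (hself : ∀ S ∈ M, ¬ S ⊆ unionEdges (M.erase S)) :
    ∃ root flower : Finset V → V, IsRootedFamily M root flower := by
  have : ∀ S ∈ M, ∃ r p : V, S = {r, p} ∧ r ≠ p ∧ ∀ T ∈ M, p ∈ T → T = S := by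
    intro S hS
    obtain ⟨p, hpS, hpU⟩ := Finset.not_subset.1 (hself S hS)
    have honly : ∀ T ∈ M, p ∈ T → T = S := fun T hT hpT => by_contra fun hne =>
      hpU (mem_unionEdges.2 ⟨T, Finset.mem_erase.2 ⟨hne, hT⟩, hpT⟩)
    obtain ⟨x, y, hxy, rfl⟩ := Finset.card_eq_two.1 (hcard S hS)
    rcases Finset.mem_insert.1 hpS with rfl | hpy
    · exact ⟨y, p, Finset.pair_comm _ _, hxy.symm, honly⟩
    · obtain rfl := Finset.mem_singleton.1 hpy
      exact ⟨x, p, rfl, hxy, honly⟩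
  choose! root flower h using this
  exact ⟨root, flower, fun S hS => (h S hS).1, fun S hS => (h S hS).2.1,
    fun S hS => (h S hS).2.2⟩

def bouquetAt (M : Finset (Finset V)) (root flower : Finset V → V) (w : V) : V × Finset V :=
  (w, {S ∈ M | root S = w}.image flower)

lemma bouquetAt_snd_nonempty {M : Finset (Finset V)} {root flower : Finset V → V} {w : V}
    (hw : w ∈ M.image root) : (bouquetAt M root flower w).2.Nonempty := by
  obtain ⟨S, hS, rfl⟩ := Finset.mem_image.1 hw
  exact ⟨flower S, Finset.mem_image_of_mem _ (Finset.mem_filter.2 ⟨hS, rfl⟩)⟩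

namespace IsRootedFamily

variable {M : Finset (Finset V)} {root flower : Finset V → V}

lemma mem_iff (h : IsRootedFamily M root flower) {S : Finset V} (hS : S ∈ M) {v : V} :
    v ∈ S ↔ v = root S ∨ v = flower S := by
  conv_lhs => rw [h.eq_pair S hS]
  simp

lemma card_eq_two (h : IsRootedFamily M root flower) {S : Finset V} (hS : S ∈ M) :
    S.card = 2 := by
  rw [h.eq_pair S hS]
  exact Finset.card_pair (h.root_ne_flower S hS)

lemma flower_ne_root (h : IsRootedFamily M root flower) {S T : Finset V} (hS : S ∈ M)
    (hT : T ∈ M) : flower S ≠ root T := by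
  intro hST
  have hTS := h.eq_of_flower_mem S hS T hT ((h.mem_iff hT).2 (Or.inl hST))
  rw [hTS] at hST
  exact h.root_ne_flower S hS hST.symm

lemma disjoint_of_root_ne (h : IsRootedFamily M root flower) {S T : Finset V} (hS : S ∈ M)
    (hT : T ∈ M) (hroot : root S ≠ root T) : Disjoint S T := by
  refine Finset.disjoint_left.2 fun v hvS hvT => ?_
  by_cases hvS' : v = flower S
  · exact hroot (congrArg root (h.eq_of_flower_mem S hS T hT (hvS' ▸ hvT))).symm
  by_cases hvT' : v = flower T
  · exact hroot (congrArg root (h.eq_of_flower_mem T hT S hS (hvT' ▸ hvS)))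
  exact hroot ((((h.mem_iff hS).1 hvS).resolve_right hvS').symm.trans
    (((h.mem_iff hT).1 hvT).resolve_right hvT'))

lemma stems_bouquetAt (h : IsRootedFamily M root flower) (w : V) :
    stems (bouquetAt M root flower w) = {S ∈ M | root S = w} := by
  calc stems (bouquetAt M root flower w)
      = {S ∈ M | root S = w}.image fun S => {w, flower S} := Finset.image_image
    _ = {S ∈ M | root S = w}.image id := Finset.image_congr fun S hS => by
        obtain ⟨hSM, rfl⟩ := Finset.mem_filter.1 hS
        exact (h.eq_pair S hSM).symm
    _ = {S ∈ M | root S = w} := Finset.image_id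

lemma biUnion_stems_bouquetAt (h : IsRootedFamily M root flower) :
    ((M.image root).image (bouquetAt M root flower)).biUnion stems = M := by
  rw [Finset.image_biUnion]
  simp only [h.stems_bouquetAt]
  exact Finset.image_biUnion_filter_eq M root

lemma isBouquet_bouquetAt (h : IsRootedFamily M root flower) {E : Finset (Finset V)}
    (hME : M ⊆ E) {w : V} (hw : w ∈ M.image root) :
    IsBouquet E (bouquetAt M root flower w) := by
  refine ⟨bouquetAt_snd_nonempty hw, fun hmem => ?_, Finset.image_subset_iff.1 ?_⟩
  · obtain ⟨S₀, hS₀, rfl⟩ := Finset.mem_image.1 hw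
    obtain ⟨S, hS, hSroot⟩ := Finset.mem_image.1 hmem
    exact h.flower_ne_root (Finset.mem_filter.1 hS).1 hS₀ hSroot
  · rw [← stems, h.stems_bouquetAt]
    exact (Finset.filter_subset _ M).trans hME

lemma disjoint_bouquetVerts_bouquetAt (h : IsRootedFamily M root flower) {w w' : V}
    (hw : w ∈ M.image root) (hw' : w' ∈ M.image root) (hne : w ≠ w') :
    Disjoint (bouquetVerts (bouquetAt M root flower w))
      (bouquetVerts (bouquetAt M root flower w')) := by
  rw [← unionEdges_stems (bouquetAt_snd_nonempty hw),
    ← unionEdges_stems (bouquetAt_snd_nonempty hw'),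
    h.stems_bouquetAt, h.stems_bouquetAt, unionEdges, unionEdges, Finset.disjoint_biUnion_left]
  intro S hS
  rw [Finset.disjoint_biUnion_right]
  intro T hT
  obtain ⟨hSM, rfl⟩ := Finset.mem_filter.1 hS
  obtain ⟨hTM, rfl⟩ := Finset.mem_filter.1 hT
  exact h.disjoint_of_root_ne hSM hTM hne

/-- An edge outside `M₀` meets an edge of `M₀`; as flowers are private, the common vertex is the
root of both. -/
lemma exists_mem_root_eq (h : IsRootedFamily M root flower) {M₀ : Finset (Finset V)}
    (hM₀M : M₀ ⊆ M) (hatt : ∀ S ∈ M, S ∉ M₀ → ∃ T ∈ M₀, (S \ T).card = 1)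
    {S : Finset V} (hS : S ∈ M) : ∃ T ∈ M₀, root T = root S := by
  by_cases hSM₀ : S ∈ M₀
  · exact ⟨S, hSM₀, rfl⟩
  obtain ⟨T, hT, hST⟩ := hatt S hS hSM₀
  refine ⟨T, hT, by_contra fun hne => ?_⟩
  rw [Finset.sdiff_eq_self_of_disjoint (h.disjoint_of_root_ne hS (hM₀M hT) (Ne.symm hne)),
    h.card_eq_two hS] at hST
  omega

lemma isInducedMatching_image (h : IsRootedFamily M root flower) {E M₀ : Finset (Finset V)}
    (hM₀ : IsSemiInducedMatching E M₀) (hM₀M : M₀ ⊆ M) {T : V → Finset V}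
    (hT : ∀ w ∈ M.image root, T w ∈ M₀ ∧ root (T w) = w) :
    IsInducedMatching E ((M.image root).image T) := by
  have hN : (M.image root).image T ⊆ M₀ := Finset.image_subset_iff.2 fun w hw => (hT w hw).1
  refine ⟨hM₀.of_subset hN fun S hS hSN hSU => ?_, ?_⟩
  · obtain ⟨S', hS', hflower⟩ :=
      mem_unionEdges.1 (hSU ((h.mem_iff (hM₀M hS)).2 (Or.inr rfl)))
    exact hSN (h.eq_of_flower_mem S (hM₀M hS) S' (hM₀M (hN hS')) hflower ▸ hS')
  · intro S hS S' hS' hne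
    obtain ⟨w, hw, rfl⟩ := Finset.mem_image.1 hS
    obtain ⟨w', hw', rfl⟩ := Finset.mem_image.1 hS'
    refine h.disjoint_of_root_ne (hM₀M (hT w hw).1) (hM₀M (hT w' hw').1) ?_
    rw [(hT w hw).2, (hT w' hw').2]
    exact fun hww => hne (hww ▸ rfl)

lemma exists_isStronglyDisjointBouquets (h : IsRootedFamily M root flower)
    {E M₀ : Finset (Finset V)} (hME : M ⊆ E) (hM₀M : M₀ ⊆ M)
    (hM₀ : IsSemiInducedMatching E M₀)
    (hatt : ∀ S ∈ M, S ∉ M₀ → ∃ T ∈ M₀, (S \ T).card = 1) :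
    ∃ B, IsStronglyDisjointBouquets E B ∧ B.biUnion stems = M := by
  have hroots : ∀ w ∈ M.image root, ∃ T ∈ M₀, root T = w := by
    intro w hw
    obtain ⟨S, hS, rfl⟩ := Finset.mem_image.1 hw
    exact h.exists_mem_root_eq hM₀M hatt hS
  choose! T hT using hroots
  have hstems : ((M.image root).image (bouquetAt M root flower)).image
      (fun b => ({b.1, flower (T b.1)} : Finset V)) = (M.image root).image T := by
    rw [Finset.image_image]
    refine Finset.image_congr fun w hw => ?_
    calc ({w, flower (T w)} : Finset V) = {root (T w), flower (T w)} := by rw [(hT w hw).2]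
      _ = T w := (h.eq_pair _ (hM₀M (hT w hw).1)).symm
  refine ⟨(M.image root).image (bouquetAt M root flower),
    ⟨?_, ?_, fun b => flower (T b.1), ?_, ?_⟩, h.biUnion_stems_bouquetAt⟩
  · rw [Finset.forall_mem_image]
    exact fun w hw => h.isBouquet_bouquetAt hME hw
  · rw [Finset.forall_mem_image]
    intro w hw b' hb' hne
    obtain ⟨w', hw', rfl⟩ := Finset.mem_image.1 hb'
    exact h.disjoint_bouquetVerts_bouquetAt hw hw' fun hww => hne (hww ▸ rfl)
  · rw [Finset.forall_mem_image]
    exact fun w hw =>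
      Finset.mem_image_of_mem _ (Finset.mem_filter.2 ⟨hM₀M (hT w hw).1, (hT w hw).2⟩)
  · rw [hstems]
    exact h.isInducedMatching_image hM₀ hM₀M hT

end IsRootedFamily

lemma IsSelfSemiDisjointSet.exists_isStronglyDisjointBouquets {E M : Finset (Finset V)}
    (hE : ∀ S ∈ E, S.card = 2) (hM : IsSelfSemiDisjointSet E M) :
    ∃ B, IsStronglyDisjointBouquets E B ∧ B.biUnion stems = M := by
  obtain ⟨hME, hself, M₀, hM₀M, hM₀, hatt⟩ := hM
  rcases M.eq_empty_or_nonempty with rfl | ⟨S, hS⟩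
  · obtain rfl := Finset.subset_empty.1 hM₀M
    refine ⟨∅, ⟨by simp, by simp, Prod.fst, by simp, ?_⟩, rfl⟩
    simpa using ⟨hM₀, by simp⟩
  -- `root` and `flower` are functions `Finset V → V`, so `V` must be nonempty.
  have : Nonempty V := (Finset.card_pos.1 (by rw [hE S (hME hS)]; norm_num)).to_type
  obtain ⟨root, flower, h⟩ := exists_isRootedFamily (fun S hS => hE S (hME hS)) hself
  exact h.exists_isStronglyDisjointBouquets hME hM₀M hM₀ hatt

end

theorem d1'_eq_d2'_eq_dG'_general
    (E : Finset (Finset V)) (h2 : ∀ S ∈ E, S.card = 2) :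
    sSup {n : ℕ | ∃ M, IsSelfDisjointSet E M ∧ (unionEdges M).card - M.card = n} =
      sSup {n : ℕ | ∃ M, IsSelfSemiDisjointSet E M ∧ (unionEdges M).card - M.card = n} ∧
    sSup {n : ℕ | ∃ M, IsSelfDisjointSet E M ∧ (unionEdges M).card - M.card = n} =
      sSup {n : ℕ | ∃ B : Finset (V × Finset V),
        IsStronglyDisjointBouquets E B ∧ B.card = n} := by
  set D₁ := {n : ℕ | ∃ M, IsSelfDisjointSet E M ∧ (unionEdges M).card - M.card = n}
  set D₂ := {n : ℕ | ∃ M, IsSelfSemiDisjointSet E M ∧ (unionEdges M).card - M.card = n}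
  set D₃ := {n : ℕ | ∃ B : Finset (V × Finset V), IsStronglyDisjointBouquets E B ∧ B.card = n}
  have h₁₂ : D₁ ⊆ D₂ := fun n ⟨M, hM, hn⟩ => ⟨M, hM.isSelfSemiDisjointSet, hn⟩
  have h₂₃ : D₂ ⊆ D₃ := by
    rintro n ⟨M, hM, rfl⟩
    obtain ⟨B, hB, rfl⟩ := hM.exists_isStronglyDisjointBouquets h2
    exact ⟨B, hB, hB.card_unionEdges_sub_card.symm⟩
  have h₃₁ : D₃ ⊆ D₁ := by
    rintro n ⟨B, hB, rfl⟩
    exact ⟨_, hB.isSelfDisjointSet, hB.card_unionEdges_sub_card⟩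
  exact ⟨congrArg sSup (h₁₂.antisymm (h₂₃.trans h₃₁)),
    congrArg sSup ((h₁₂.trans h₂₃).antisymm h₃₁)⟩

/-- for a graph `G` with at least one edge,
`d'_{1,G} = d'_{2,G} = d'_G`: the maximum of `j - i` over self disjoint sets of
type `(i, j)`, the maximum of `j - i` over self semi-disjoint sets of type
`(i, j)`, and the maximum number of bouquets in a strongly disjoint set of
bouquets, all coincide. -/
theorem d1'_eq_d2'_eq_dG'
    (E : Finset (Finset V)) (hH : IsSimpleHypergraph E)
    (h2 : ∀ S ∈ E, S.card = 2) (hne : E.Nonempty) :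
    sSup {n : ℕ | ∃ M, IsSelfDisjointSet E M ∧ (unionEdges M).card - M.card = n} =
      sSup {n : ℕ | ∃ M, IsSelfSemiDisjointSet E M ∧ (unionEdges M).card - M.card = n} ∧
    sSup {n : ℕ | ∃ M, IsSelfDisjointSet E M ∧ (unionEdges M).card - M.card = n} =
      sSup {n : ℕ | ∃ B : Finset (V × Finset V),
        IsStronglyDisjointBouquets E B ∧ B.card = n} :=
  d1'_eq_d2'_eq_dG'_general E h2
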